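/- Let d ≥ 2 and let D_r, D_n be Borel probability measures on ℝ^d with Lebesgue densities p_r, p_n. Define ρ_{D_r}(u) := ( ∫_0^∞ t^d p_r(t·u) dt )^{1/(d+1)} and ρ̃_{D_n}(u) := ( ∫_0^∞ t^{d−2} p_n(t·u) dt )^{1/(d−1)} for u ∈ S^{d-1}, and assume both are positive and continuous on S^{d-1}; let L_r be the star body with radial function ρ_{D_r}. Then for every star body K in ℝ^d: (i) the function u ↦ ( ρ_K(u)^{−1} + ρ_K(u) · ρ̃_{D_n}(u)^{d−1} / ρ_{D_r}(u)^{d+1} )^{−1} is the radial function of a star body K_{r,n}; and (ii) E_{D_r}[‖x‖_K] + E_{D_n}[‖x‖_K^{−1}] = ∫_{S^{d-1}} ( ρ_K(u)^{−1} + ρ_K(u) · ρ̃_{D_n}(u)^{d−1} / ρ_{D_r}(u)^{d+1} ) · ρ_{D_r}(u)^{d+1} dσ(u) = d · Ṽ_{−1}(L_r, K_{r,n}), with both expectations finite. -/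

import Mathlib

open MeasureTheory Metric Set Filter Pointwise

noncomputable section

abbrev Euc (d : ℕ) : Type := EuclideanSpace ℝ (Fin d)

/-- Radial function of a set: `ρ_K(x) = sup {t > 0 : t • x ∈ K}`. -/
def radialFn {d : ℕ} (K : Set (Euc d)) (x : Euc d) : ℝ :=
  sSup {t : ℝ | 0 < t ∧ t • x ∈ K}

/-- A star body: compact, `0` in the interior, star-shaped about `0`, with radial function
positive and continuous on the unit sphere. -/
def IsStarBody {d : ℕ} (K : Set (Euc d)) : Prop :=
  IsCompact K ∧ (0 : Euc d) ∈ interior K ∧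
    (∀ x ∈ K, segment ℝ 0 x ⊆ K) ∧
    (∀ u ∈ sphere (0 : Euc d) 1, 0 < radialFn K u) ∧
    ContinuousOn (radialFn K) (sphere (0 : Euc d) 1)

/-- The kernel of a star body. -/
def starKernel {d : ℕ} (K : Set (Euc d)) : Set (Euc d) :=
  {x | x ∈ K ∧ ∀ y ∈ K, segment ℝ x y ⊆ K}

/-- Radial metric between star bodies. -/
def radialDist {d : ℕ} (K L : Set (Euc d)) : ℝ :=
  ⨆ u : sphere (0 : Euc d) 1, |radialFn K (u : Euc d) - radialFn L (u : Euc d)|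

/-- The adversarial objective `F(K; μ, ν) = E_μ[‖x‖_K] - E_ν[‖x‖_K]`. -/
def Fobj {d : ℕ} (K : Set (Euc d)) (μ ν : Measure (Euc d)) : ℝ :=
  (∫ x, gauge K x ∂μ) - (∫ x, gauge K x ∂ν)

/-!
Along the ray through `u ∈ S^{d-1}` the gauge is `‖t • u‖_K = t / ρ_K(u)`, so the radial
integrals of `‖x‖_K p_r(x)` and `‖x‖_K⁻¹ p_n(x)` are `ρ_K(u)⁻¹ ρ_{D_r}(u)^{d+1}` and
`ρ_K(u) ρ̃_{D_n}(u)^{d-1}`. Their sum is continuous, hence bounded, on the sphere; this gives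
the integrability, and polar integration turns the loss into the integral of that sum against `σ`.
A positive continuous function `f` on the sphere is the radial function of the star body
`{s f(u) u : u ∈ S^{d-1}, 0 ≤ s ≤ 1}`, which provides `K_{r,n}`.
-/

variable {d : ℕ}

namespace IsStarBody

variable {K : Set (Euc d)}

lemma starConvex (hK : IsStarBody K) : StarConvex ℝ 0 K :=
  starConvex_iff_segment_subset.2 hK.2.2.1

lemma radialFn_pos (hK : IsStarBody K) {u : Euc d} (hu : u ∈ sphere (0 : Euc d) 1) :
    0 < radialFn K u :=
  hK.2.2.2.1 u hu

lemma continuous_radialFn (hK : IsStarBody K) :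
    Continuous fun u : sphere (0 : Euc d) 1 => radialFn K (u : Euc d) :=
  continuousOn_iff_continuous_domRestrict.1 hK.2.2.2.2

lemma setOf_smul_mem_eq_Ioc (hK : IsStarBody K) {u : Euc d} (hu : u ∈ sphere (0 : Euc d) 1) :
    {t : ℝ | 0 < t ∧ t • u ∈ K} = Ioc 0 (radialFn K u) := by
  set S := {t : ℝ | 0 < t ∧ t • u ∈ K}
  have hρ : 0 < sSup S := hK.radialFn_pos hu
  have hS : S.Nonempty := by
    by_contra h
    rw [not_nonempty_iff_eq_empty.1 h, Real.sSup_empty] at hρ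
    exact hρ.false
  have hSbdd : BddAbove S := by
    obtain ⟨R, hR⟩ := hK.1.isBounded.subset_closedBall 0
    refine ⟨R, fun t ht => ?_⟩
    simpa [norm_smul, mem_sphere_zero_iff_norm.1 hu, abs_of_pos ht.1] using hR ht.2
  have hρK : sSup S • u ∈ K := by
    rw [← hK.1.isClosed.closure_eq]
    exact map_mem_closure (f := fun t : ℝ => t • u) (continuous_id.smul continuous_const)
      (csSup_mem_closure hS hSbdd) fun t ht => ht.2
  ext t
  refine ⟨fun ht => ⟨ht.1, le_csSup hSbdd ht⟩, fun ⟨ht0, htρ⟩ => ⟨ht0, ?_⟩⟩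
  have h := hK.starConvex.smul_mem hρK (div_nonneg ht0.le hρ.le) ((div_le_one hρ).2 htρ)
  rwa [smul_smul, div_mul_cancel₀ _ hρ.ne'] at h

lemma gauge_eq_inv_radialFn (hK : IsStarBody K) {u : Euc d} (hu : u ∈ sphere (0 : Euc d) 1) :
    gauge K u = (radialFn K u)⁻¹ := by
  have hρ : 0 < radialFn K u := hK.radialFn_pos hu
  have hset : {r | r ∈ Ioi (0 : ℝ) ∧ r⁻¹ • u ∈ K} = Ici (radialFn K u)⁻¹ := by
    ext r
    have h := congrArg (r⁻¹ ∈ ·) (hK.setOf_smul_mem_eq_Ioc hu)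
    simp only [mem_ofPred_eq, mem_Ioc, eq_iff_iff, inv_pos] at h
    simp only [mem_ofPred_eq, mem_Ioi, mem_Ici]
    constructor
    · rintro ⟨hr, hrK⟩
      exact (inv_le_comm₀ hr hρ).1 ((h.1 ⟨hr, hrK⟩).2)
    · intro hr
      have hr0 : 0 < r := (inv_pos.2 hρ).trans_le hr
      exact ⟨hr0, (h.2 ⟨hr0, (inv_le_comm₀ hρ hr0).1 hr⟩).2⟩
  rw [gauge_def', hset, csInf_Ici]

lemma gauge_smul (hK : IsStarBody K) {u : Euc d} (hu : u ∈ sphere (0 : Euc d) 1) {t : ℝ}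
    (ht : 0 ≤ t) : gauge K (t • u) = t * (radialFn K u)⁻¹ := by
  rw [gauge_smul_of_nonneg ht, hK.gauge_eq_inv_radialFn hu, smul_eq_mul]

lemma continuous_gauge (hK : IsStarBody K) : Continuous (gauge K) := by
  refine continuous_iff_continuousAt.2 fun x => ?_
  rcases eq_or_ne x 0 with rfl | hx
  · exact continuousAt_gauge_zero (mem_interior_iff_mem_nhds.1 hK.2.1)
  have hdir : ∀ y : Euc d, y ≠ 0 → ‖y‖⁻¹ • y ∈ sphere (0 : Euc d) 1 := fun y hy => by
    simpa using norm_smul_inv_norm (𝕜 := ℝ) hy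
  have hpolar : EqOn (fun y : Euc d => ‖y‖ * (radialFn K (‖y‖⁻¹ • y))⁻¹) (gauge K) {0}ᶜ :=
    fun y hy => by
      dsimp only
      rw [← hK.gauge_smul (hdir y hy) (norm_nonneg y), smul_inv_smul₀ (norm_ne_zero_iff.2 hy)]
  refine (ContinuousOn.congr ?_ hpolar.symm).continuousAt (isOpen_compl_singleton.mem_nhds hx)
  have hdir_cont : ContinuousOn (fun y : Euc d => ‖y‖⁻¹ • y) {0}ᶜ :=
    (continuous_norm.continuousOn.inv₀ fun y hy => norm_ne_zero_iff.2 hy).smul continuousOn_id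
  exact continuous_norm.continuousOn.mul <|
    (hK.2.2.2.2.comp hdir_cont hdir).inv₀ fun y hy => (hK.radialFn_pos (hdir y hy)).ne'

lemma integrableOn_ray_and_integral_eq (hK : IsStarBody K) (hd : 2 ≤ d) {pr pn : Euc d → ℝ}
    {u : Euc d} (hu : u ∈ sphere (0 : Euc d) 1)
    (hr : IntegrableOn (fun t => t ^ d * pr (t • u)) (Ioi 0))
    (hn : IntegrableOn (fun t => t ^ (d - 2) * pn (t • u)) (Ioi 0)) :
    IntegrableOn
        (fun t => t ^ (d - 1) * (gauge K (t • u) * pr (t • u) + (gauge K (t • u))⁻¹ * pn (t • u)))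
        (Ioi 0) ∧
      ∫ t in Ioi (0 : ℝ),
          t ^ (d - 1) * (gauge K (t • u) * pr (t • u) + (gauge K (t • u))⁻¹ * pn (t • u)) =
        (radialFn K u)⁻¹ * (∫ t in Ioi (0 : ℝ), t ^ d * pr (t • u)) +
          radialFn K u * ∫ t in Ioi (0 : ℝ), t ^ (d - 2) * pn (t • u) := by
  have hρ : 0 < radialFn K u := hK.radialFn_pos hu
  have hsplit : EqOn
      (fun t => t ^ (d - 1) * (gauge K (t • u) * pr (t • u) + (gauge K (t • u))⁻¹ * pn (t • u)))
      (fun t => (radialFn K u)⁻¹ * (t ^ d * pr (t • u)) +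
        radialFn K u * (t ^ (d - 2) * pn (t • u))) (Ioi 0) := fun t (ht : 0 < t) => by
    obtain ⟨k, rfl⟩ := Nat.exists_eq_add_of_le' hd
    simp only [hK.gauge_smul hu ht.le, Nat.add_sub_cancel, show k + 2 - 1 = k + 1 by omega]
    field_simp
    ring
  refine ⟨IntegrableOn.congr_fun ((hr.const_mul _).add (hn.const_mul _)) hsplit.symm
    measurableSet_Ioi, ?_⟩
  rw [setIntegral_congr_fun measurableSet_Ioi hsplit, integral_add (hr.const_mul _)
    (hn.const_mul _), integral_const_mul, integral_const_mul]

end IsStarBody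

lemma eq_of_smul_eq_smul_of_mem_sphere {E : Type*} [NormedAddCommGroup E] [NormedSpace ℝ E]
    {u v : E} (hu : u ∈ sphere (0 : E) 1) (hv : v ∈ sphere (0 : E) 1) {s t : ℝ} (hs : 0 ≤ s)
    (ht : 0 < t) (h : s • v = t • u) : s = t ∧ v = u := by
  have hst : s = t := by
    simpa [norm_smul, abs_of_nonneg hs, abs_of_pos ht, mem_sphere_zero_iff_norm.1 hu,
      mem_sphere_zero_iff_norm.1 hv] using congrArg norm h
  subst hst
  exact ⟨rfl, smul_right_injective E ht.ne' h⟩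

lemma exists_isStarBody_radialFn_eq [NeZero d] (f : sphere (0 : Euc d) 1 → ℝ) (hf : Continuous f)
    (hf0 : ∀ u, 0 < f u) :
    ∃ K : Set (Euc d), IsStarBody K ∧ ∀ u : sphere (0 : Euc d) 1, radialFn K u = f u := by
  set K := (fun p : sphere (0 : Euc d) 1 × ℝ => (p.2 * f p.1) • (p.1 : Euc d)) '' (univ ×ˢ Icc 0 1)
  have hray (u : sphere (0 : Euc d) 1) : {t : ℝ | 0 < t ∧ t • (u : Euc d) ∈ K} = Ioc 0 (f u) := by
    ext t
    constructor
    · rintro ⟨ht, ⟨v, s⟩, ⟨-, hs⟩, hvu⟩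
      obtain ⟨rfl, hv⟩ :=
        eq_of_smul_eq_smul_of_mem_sphere u.2 v.2 (mul_nonneg hs.1 (hf0 v).le) ht hvu
      rw [Subtype.ext hv] at ht ⊢
      exact ⟨ht, mul_le_of_le_one_left (hf0 u).le hs.2⟩
    · rintro ⟨ht, htf⟩
      refine ⟨ht, ⟨u, t / f u⟩,
        ⟨trivial, div_nonneg ht.le (hf0 u).le, (div_le_one (hf0 u)).2 htf⟩, ?_⟩
      simp only [div_mul_cancel₀ _ (hf0 u).ne']
  have hρ (u : sphere (0 : Euc d) 1) : radialFn K u = f u := by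
    rw [radialFn, hray u, csSup_Ioc (hf0 u)]
  have : Nonempty (sphere (0 : Euc d) 1) := (NormedSpace.sphere_nonempty.2 zero_le_one).to_subtype
  obtain ⟨u₀, -, hmin⟩ := isCompact_univ.exists_isMinOn univ_nonempty hf.continuousOn
  have hball : ball 0 (f u₀) ⊆ K := by
    intro x hx
    rcases eq_or_ne x 0 with rfl | hx0
    · exact ⟨⟨u₀, 0⟩, ⟨trivial, left_mem_Icc.2 zero_le_one⟩, by simp⟩
    set u : sphere (0 : Euc d) 1 := ⟨‖x‖⁻¹ • x, by simpa using norm_smul_inv_norm (𝕜 := ℝ) hx0⟩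
    have hxu : x = ‖x‖ • (u : Euc d) := (smul_inv_smul₀ (norm_ne_zero_iff.2 hx0) x).symm
    have hmem : ‖x‖ ∈ Ioc 0 (f u) :=
      ⟨norm_pos_iff.2 hx0, (mem_ball_zero_iff.1 hx).le.trans (hmin (mem_univ u))⟩
    rw [← hray u] at hmem
    rw [hxu]
    exact hmem.2
  have hstar : StarConvex ℝ 0 K := by
    rintro _ ⟨⟨v, s⟩, ⟨-, hs⟩, rfl⟩ a b ha hb hab
    refine ⟨⟨v, b * s⟩, ⟨trivial, mul_nonneg hb hs.1, ?_⟩, ?_⟩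
    · exact mul_le_one₀ (by linarith) hs.1 hs.2
    · simp only [smul_zero, zero_add, smul_smul, mul_assoc]
  refine ⟨K, ⟨?_, ?_, starConvex_iff_segment_subset.1 hstar, fun u hu => ?_, ?_⟩, hρ⟩
  · exact (isCompact_univ.prod isCompact_Icc).image (by fun_prop)
  · exact mem_interior.2 ⟨_, hball, isOpen_ball, mem_ball_self (hf0 u₀)⟩
  · exact (hρ ⟨u, hu⟩).trans_gt (hf0 _)
  · rw [continuousOn_iff_continuous_domRestrict]
    convert hf using 1
    exact funext hρ

lemma ENNReal.iSup_ofReal_min_natCast {a : ℝ} :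
    ⨆ N : ℕ, ENNReal.ofReal (min a N) = ENNReal.ofReal a := by
  simp only [ENNReal.ofReal_min, ENNReal.ofReal_natCast, ← inf_iSup_eq, ENNReal.iSup_natCast,
    inf_top_eq]

theorem integrable_of_forall_integral_le {α : Type*} [MeasurableSpace α] {μ : Measure α}
    [SigmaFinite μ] {f : α → ℝ} (hf : AEMeasurable f μ) (hf0 : 0 ≤ f) (B : ℝ)
    (hB : ∀ g : α → ℝ, Integrable g μ → 0 ≤ g → g ≤ f → ∫ x, g x ∂μ ≤ B) : Integrable f μ := by
  refine integrable_of_forall_fin_meas_le (ENNReal.ofReal B) ENNReal.ofReal_lt_top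
    hf.aestronglyMeasurable fun s hs hμs => ?_
  set g : ℕ → α → ℝ := fun N => s.indicator fun x => min (f x) N
  have hg_int (N : ℕ) : Integrable (g N) μ := by
    refine (integrable_indicator_iff hs).2 <|
      Integrable.mono' (integrableOn_const (C := (N : ℝ)) hμs)
        (hf.min aemeasurable_const).aestronglyMeasurable.restrict (ae_of_all _ fun x => ?_)
    rw [Real.norm_of_nonneg (le_min (hf0 x) (Nat.cast_nonneg N))]
    exact min_le_right _ _
  have hg0 (N : ℕ) : 0 ≤ g N := indicator_nonneg fun x _ => le_min (hf0 x) (Nat.cast_nonneg N)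
  have hgf (N : ℕ) : g N ≤ f := indicator_le' (fun x _ => min_le_left _ _) fun x _ => hf0 x
  calc ∫⁻ x in s, ‖f x‖ₑ ∂μ = ∫⁻ x in s, ⨆ N : ℕ, ENNReal.ofReal (min (f x) N) ∂μ := by
        simp only [ENNReal.iSup_ofReal_min_natCast, Real.enorm_of_nonneg (hf0 _)]
    _ = ⨆ N : ℕ, ENNReal.ofReal (∫ x, g N x ∂μ) := by
        rw [lintegral_iSup' (fun N => (hf.min aemeasurable_const).ennreal_ofReal.restrict)
          (ae_of_all _ fun x N M hNM =>
            ENNReal.ofReal_le_ofReal (min_le_min_left _ (Nat.cast_le.2 hNM)))]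
        refine iSup_congr fun N => ?_
        rw [ofReal_integral_eq_lintegral_ofReal (hg_int N) (ae_of_all _ (hg0 N)),
          ← lintegral_indicator hs]
        congr with x
        exact congrFun (indicator_comp_of_zero (g := ENNReal.ofReal) ENNReal.ofReal_zero) x
    _ ≤ ENNReal.ofReal B :=
        iSup_le fun N => ENNReal.ofReal_le_ofReal (hB _ (hg_int N) (hg0 N) (hgf N))

section WithDensity

variable {α : Type*} [MeasurableSpace α] {μ : Measure α} {p : α → ℝ}

lemma integrable_withDensity_ofReal_iff (hp : Measurable p) (hp0 : 0 ≤ p) {f : α → ℝ} :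
    Integrable f (μ.withDensity fun x => ENNReal.ofReal (p x)) ↔
      Integrable (fun x => f x * p x) μ := by
  rw [integrable_withDensity_iff hp.ennreal_ofReal (ae_of_all _ fun _ => ENNReal.ofReal_lt_top)]
  simp only [ENNReal.toReal_ofReal (hp0 _)]

lemma integral_withDensity_ofReal (hp : Measurable p) (hp0 : 0 ≤ p) (f : α → ℝ) :
    ∫ x, f x ∂(μ.withDensity fun x => ENNReal.ofReal (p x)) = ∫ x, f x * p x ∂μ := by
  rw [integral_withDensity_eq_integral_toReal_smul hp.ennreal_ofReal
    (ae_of_all _ fun _ => ENNReal.ofReal_lt_top)]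
  simp only [ENNReal.toReal_ofReal (hp0 _), smul_eq_mul, mul_comm]

end WithDensity

lemma integral_ray_indicator_ball [NeZero d] {u : Euc d} (hu : u ∈ sphere (0 : Euc d) 1) :
    ∫ t in Ioi (0 : ℝ), t ^ (d - 1) * (ball (0 : Euc d) 1).indicator 1 (t • u) = (d : ℝ)⁻¹ := by
  have hray : EqOn (fun t : ℝ => t ^ (d - 1) * (ball (0 : Euc d) 1).indicator 1 (t • u))
      ((Iio 1).indicator fun t => t ^ (d - 1)) (Ioi 0) := fun t (ht : 0 < t) => by
    have hmem : t • u ∈ ball (0 : Euc d) 1 ↔ t ∈ Iio 1 := by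
      simp [norm_smul, abs_of_pos ht, mem_sphere_zero_iff_norm.1 hu]
    by_cases h : t ∈ Iio 1
    · simp [indicator_of_mem h, indicator_of_mem (hmem.2 h)]
    · simp [indicator_of_notMem h, indicator_of_notMem (mt hmem.1 h)]
  rw [setIntegral_congr_fun measurableSet_Ioi hray, setIntegral_indicator measurableSet_Iio,
    Ioi_inter_Iio, ← integral_Ioc_eq_integral_Ioo, ← intervalIntegral.integral_of_le zero_le_one,
    integral_pow]
  simp [Nat.cast_sub NeZero.one_le]

def IsPolarMeasure (σ : Measure (sphere (0 : Euc d) 1)) : Prop :=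
  ∀ g : Euc d → ℝ, Integrable g volume →
    ∫ x, g x = ∫ u : sphere (0 : Euc d) 1,
      (∫ t in Ioi (0 : ℝ), t ^ (d - 1) * g (t • (u : Euc d))) ∂σ

namespace IsPolarMeasure

variable {σ : Measure (sphere (0 : Euc d) 1)}

/-- Testing the polar formula on the unit ball gives `vol(B) = σ(S^{d-1}) / d`. -/
lemma isFiniteMeasure [NeZero d] (hσ : IsPolarMeasure σ) : IsFiniteMeasure σ := by
  have hball := hσ ((ball (0 : Euc d) 1).indicator 1)
    ((integrable_indicator_iff measurableSet_ball).2 (integrableOn_const measure_ball_lt_top.ne))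
  rw [integral_congr_ae (ae_of_all _ fun u => integral_ray_indicator_ball u.2), integral_const,
    integral_indicator_one measurableSet_ball] at hball
  refine ⟨lt_top_iff_ne_top.2 fun htop => ?_⟩
  simp only [measureReal_def, htop, ENNReal.toReal_top, zero_smul, ENNReal.toReal_eq_zero_iff]
    at hball
  exact hball.elim (measure_ball_pos volume (0 : Euc d) one_pos).ne' measure_ball_lt_top.ne

lemma integrable_of_bddAbove [NeZero d] (hσ : IsPolarMeasure σ) {g : Euc d → ℝ}
    (hg : AEMeasurable g) (hg0 : 0 ≤ g)
    (hray : ∀ u : sphere (0 : Euc d) 1,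
      IntegrableOn (fun t => t ^ (d - 1) * g (t • (u : Euc d))) (Ioi 0))
    (hbdd : BddAbove (range fun u : sphere (0 : Euc d) 1 =>
      ∫ t in Ioi (0 : ℝ), t ^ (d - 1) * g (t • (u : Euc d)))) :
    Integrable g := by
  have := hσ.isFiniteMeasure
  obtain ⟨C, hC⟩ := hbdd
  -- the polar formula only applies to integrable functions, so it is used on minorants of `g`
  refine integrable_of_forall_integral_le hg hg0 (C * σ.real univ) fun h hh hh0 hhg => ?_
  have hray_nonneg (u : sphere (0 : Euc d) 1) : ∀ t ∈ Ioi (0 : ℝ), 0 ≤ t ^ (d - 1) * h (t • u) :=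
    fun t ht => mul_nonneg (pow_nonneg (le_of_lt ht) _) (hh0 _)
  rw [hσ h hh]
  refine (le_abs_self _).trans ?_
  rw [← Real.norm_eq_abs]
  refine norm_integral_le_of_norm_le_const (ae_of_all _ fun u => ?_)
  rw [Real.norm_of_nonneg (setIntegral_nonneg measurableSet_Ioi (hray_nonneg u))]
  refine (integral_mono_of_nonneg (ae_restrict_of_forall_mem measurableSet_Ioi (hray_nonneg u))
    (hray u) (ae_restrict_of_forall_mem measurableSet_Ioi fun t ht => ?_)).trans (hC ⟨u, rfl⟩)
  exact mul_le_mul_of_nonneg_left (hhg _) (pow_nonneg (le_of_lt ht) _)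

end IsPolarMeasure

lemma IsStarBody.hellinger_loss_eq_integral_sphere {K : Set (Euc d)} (hK : IsStarBody K)
    (hd : 2 ≤ d) {σ : Measure (sphere (0 : Euc d) 1)} (hσ : IsPolarMeasure σ) {pr pn : Euc d → ℝ}
    (hprm : Measurable pr) (hpnm : Measurable pn) (hpr0 : 0 ≤ pr) (hpn0 : 0 ≤ pn)
    {A B : sphere (0 : Euc d) 1 → ℝ} (hA : Continuous A) (hB : Continuous B)
    (hprA : ∀ u : sphere (0 : Euc d) 1,
      IntegrableOn (fun t => t ^ d * pr (t • (u : Euc d))) (Ioi 0) ∧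
        ∫ t in Ioi (0 : ℝ), t ^ d * pr (t • (u : Euc d)) = A u)
    (hpnB : ∀ u : sphere (0 : Euc d) 1,
      IntegrableOn (fun t => t ^ (d - 2) * pn (t • (u : Euc d))) (Ioi 0) ∧
        ∫ t in Ioi (0 : ℝ), t ^ (d - 2) * pn (t • (u : Euc d)) = B u) :
    Integrable (gauge K) (volume.withDensity fun x => ENNReal.ofReal (pr x)) ∧
      Integrable (fun x => (gauge K x)⁻¹) (volume.withDensity fun x => ENNReal.ofReal (pn x)) ∧
      (∫ x, gauge K x ∂(volume.withDensity fun x => ENNReal.ofReal (pr x))) +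
          (∫ x, (gauge K x)⁻¹ ∂(volume.withDensity fun x => ENNReal.ofReal (pn x))) =
        ∫ u : sphere (0 : Euc d) 1,
          ((radialFn K (u : Euc d))⁻¹ * A u + radialFn K (u : Euc d) * B u) ∂σ := by
  have : NeZero d := ⟨by omega⟩
  have hgauge := hK.continuous_gauge
  have hgauge0 (x : Euc d) : 0 ≤ gauge K x := gauge_nonneg x
  have hlossr : AEMeasurable fun x => gauge K x * pr x := hgauge.aemeasurable.mul hprm.aemeasurable
  have hlossn : AEMeasurable fun x => (gauge K x)⁻¹ * pn x :=
    hgauge.aemeasurable.inv.mul hpnm.aemeasurable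
  have hlossr0 (x : Euc d) : 0 ≤ gauge K x * pr x := mul_nonneg (hgauge0 x) (hpr0 x)
  have hlossn0 (x : Euc d) : 0 ≤ (gauge K x)⁻¹ * pn x :=
    mul_nonneg (inv_nonneg.2 (hgauge0 x)) (hpn0 x)
  have hray (u : sphere (0 : Euc d) 1) :=
    hK.integrableOn_ray_and_integral_eq hd u.2 (hprA u).1 (hpnB u).1
  have hloss : Integrable fun x => gauge K x * pr x + (gauge K x)⁻¹ * pn x := by
    refine hσ.integrable_of_bddAbove (hlossr.add hlossn)
      (fun x => add_nonneg (hlossr0 x) (hlossn0 x)) (fun u => (hray u).1) ?_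
    simp only [(hray _).2, (hprA _).2, (hpnB _).2]
    exact (isCompact_range (((hK.continuous_radialFn.inv₀ fun u => (hK.radialFn_pos u.2).ne').mul
      hA).add (hK.continuous_radialFn.mul hB))).bddAbove
  have hr : Integrable fun x => gauge K x * pr x :=
    hloss.mono' hlossr.aestronglyMeasurable (ae_of_all _ fun x => by
      rw [Real.norm_of_nonneg (hlossr0 x)]; linarith [hlossn0 x])
  have hn : Integrable fun x => (gauge K x)⁻¹ * pn x :=
    hloss.mono' hlossn.aestronglyMeasurable (ae_of_all _ fun x => by
      rw [Real.norm_of_nonneg (hlossn0 x)]; linarith [hlossr0 x])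
  refine ⟨(integrable_withDensity_ofReal_iff hprm hpr0).2 hr,
    (integrable_withDensity_ofReal_iff hpnm hpn0).2 hn, ?_⟩
  rw [integral_withDensity_ofReal hprm hpr0, integral_withDensity_ofReal hpnm hpn0,
    ← integral_add hr hn, hσ _ hloss]
  refine integral_congr_ae (ae_of_all _ fun u => ?_)
  simp only [(hray u).2, (hprA u).2, (hpnB u).2]

lemma integrableOn_and_integral_eq_pow_of_rpow_one_div {f : ℝ → ℝ} {s : Set ℝ} (hs : MeasurableSet s)
    (hf : ∀ t ∈ s, 0 ≤ f t) {n : ℕ} (hn : n ≠ 0) {ρ : ℝ}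
    (hρ : ρ = (∫ t in s, f t) ^ (1 / (n : ℝ))) (hρ0 : ρ ≠ 0) :
    IntegrableOn f s ∧ ∫ t in s, f t = ρ ^ n := by
  refine ⟨Integrable.of_integral_ne_zero fun h => hρ0 ?_, ?_⟩
  · rw [hρ, h, Real.zero_rpow (one_div_ne_zero (Nat.cast_ne_zero.2 hn))]
  · rw [hρ, one_div, Real.rpow_inv_natCast_pow (setIntegral_nonneg hs hf) hn]

theorem hellinger_loss_eq_dualMixedVolume_general {d : ℕ} (hd : 2 ≤ d)
    (σ : Measure (sphere (0 : Euc d) 1))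
    (hσ : ∀ g : Euc d → ℝ, Integrable g volume →
      ∫ x, g x = ∫ u : sphere (0 : Euc d) 1,
        (∫ t in Ioi (0 : ℝ), t ^ (d - 1) * g (t • (u : Euc d))) ∂σ)
    (μ ν : Measure (Euc d))
    (pr pn : Euc d → ℝ) (hprm : Measurable pr) (hpnm : Measurable pn)
    (hpr0 : ∀ x, 0 ≤ pr x) (hpn0 : ∀ x, 0 ≤ pn x)
    (hμ : μ = volume.withDensity (fun x => ENNReal.ofReal (pr x)))
    (hν : ν = volume.withDensity (fun x => ENNReal.ofReal (pn x)))
    (ρr ρtn : sphere (0 : Euc d) 1 → ℝ)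
    (hρr : ∀ u : sphere (0 : Euc d) 1,
      ρr u = (∫ t in Ioi (0 : ℝ), t ^ d * pr (t • (u : Euc d))) ^ ((1 : ℝ) / (d + 1)))
    (hρtn : ∀ u : sphere (0 : Euc d) 1,
      ρtn u = (∫ t in Ioi (0 : ℝ), t ^ (d - 2) * pn (t • (u : Euc d))) ^ ((1 : ℝ) / (d - 1)))
    (hρrc : Continuous ρr) (hρtnc : Continuous ρtn)
    (hρrp : ∀ u, 0 < ρr u) (hρtnp : ∀ u, 0 < ρtn u)
    (Lr : Set (Euc d))
    (hLrρ : ∀ u : sphere (0 : Euc d) 1, radialFn Lr (u : Euc d) = ρr u) :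
    ∀ K : Set (Euc d), IsStarBody K →
      ∃ Krn : Set (Euc d), IsStarBody Krn ∧
        (∀ u : sphere (0 : Euc d) 1,
          radialFn Krn (u : Euc d) =
            ((radialFn K (u : Euc d))⁻¹ +
              radialFn K (u : Euc d) * ρtn u ^ (d - 1) / ρr u ^ (d + 1))⁻¹) ∧
        Integrable (fun x => gauge K x) μ ∧
        Integrable (fun x => (gauge K x)⁻¹) ν ∧
        (∫ x, gauge K x ∂μ) + (∫ x, (gauge K x)⁻¹ ∂ν) =
          ∫ u : sphere (0 : Euc d) 1,
            ((radialFn K (u : Euc d))⁻¹ +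
              radialFn K (u : Euc d) * ρtn u ^ (d - 1) / ρr u ^ (d + 1)) *
              ρr u ^ (d + 1) ∂σ ∧
        (∫ u : sphere (0 : Euc d) 1,
            ((radialFn K (u : Euc d))⁻¹ +
              radialFn K (u : Euc d) * ρtn u ^ (d - 1) / ρr u ^ (d + 1)) *
              ρr u ^ (d + 1) ∂σ) =
          (d : ℝ) * ((1 / (d : ℝ)) * ∫ u : sphere (0 : Euc d) 1,
            radialFn Lr (u : Euc d) ^ (d + 1) * (radialFn Krn (u : Euc d))⁻¹ ∂σ) := by
  intro K hK
  have : NeZero d := ⟨by omega⟩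
  set h : sphere (0 : Euc d) 1 → ℝ := fun u =>
    (radialFn K (u : Euc d))⁻¹ + radialFn K (u : Euc d) * ρtn u ^ (d - 1) / ρr u ^ (d + 1)
  have hh (u : sphere (0 : Euc d) 1) : 0 < h u := by
    have := hK.radialFn_pos u.2; have := hρrp u; have := hρtnp u; positivity
  have hhc : Continuous h :=
    (hK.continuous_radialFn.inv₀ fun u => (hK.radialFn_pos u.2).ne').add
      ((hK.continuous_radialFn.mul (hρtnc.pow _)).div (hρrc.pow _)
        fun u => (pow_pos (hρrp u) _).ne')
  obtain ⟨Krn, hKrn, hKrnρ⟩ := exists_isStarBody_radialFn_eq (fun u => (h u)⁻¹)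
    (hhc.inv₀ fun u => (hh u).ne') fun u => inv_pos.2 (hh u)
  have hprA (u : sphere (0 : Euc d) 1) :=
    integrableOn_and_integral_eq_pow_of_rpow_one_div (f := fun t => t ^ d * pr (t • (u : Euc d)))
      measurableSet_Ioi (fun t (ht : 0 < t) => mul_nonneg (pow_nonneg ht.le _) (hpr0 _))
      (n := d + 1) d.succ_ne_zero (by rw [hρr u, Nat.cast_succ]) (hρrp u).ne'
  have hpnB (u : sphere (0 : Euc d) 1) :=
    integrableOn_and_integral_eq_pow_of_rpow_one_div (f := fun t => t ^ (d - 2) * pn (t • (u : Euc d)))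
      measurableSet_Ioi (fun t (ht : 0 < t) => mul_nonneg (pow_nonneg ht.le _) (hpn0 _))
      (n := d - 1) (by omega) (by rw [hρtn u, Nat.cast_sub (by omega), Nat.cast_one]) (hρtnp u).ne'
  obtain ⟨hμi, hνi, hloss⟩ := hK.hellinger_loss_eq_integral_sphere hd hσ hprm hpnm hpr0 hpn0
    (A := fun u => ρr u ^ (d + 1)) (B := fun u => ρtn u ^ (d - 1)) (by fun_prop) (by fun_prop)
    hprA hpnB
  subst hμ hν
  refine ⟨Krn, hKrn, hKrnρ, hμi, hνi, hloss.trans (integral_congr_ae (ae_of_all _ fun u => ?_)), ?_⟩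
  · field_simp [(pow_pos (hρrp u) (d + 1)).ne']
  · rw [← mul_assoc, mul_one_div_cancel (by positivity), one_mul]
    refine integral_congr_ae (ae_of_all _ fun u => ?_)
    beta_reduce
    rw [hLrρ, hKrnρ, inv_inv, mul_comm]

/-- The Hellinger-based loss `E_{D_r}[‖x‖_K] + E_{D_n}[‖x‖_K⁻¹]` equals a
single dual mixed volume `d·Ṽ₋₁(L_r, K_{r,n})` for a star body `K_{r,n}` depending on
`D_r`, `D_n`, and `K`. -/
theorem hellinger_loss_eq_dualMixedVolume {d : ℕ} (hd : 2 ≤ d)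
    (σ : Measure (sphere (0 : Euc d) 1))
    (hσ : ∀ g : Euc d → ℝ, Integrable g volume →
      ∫ x, g x = ∫ u : sphere (0 : Euc d) 1,
        (∫ t in Ioi (0 : ℝ), t ^ (d - 1) * g (t • (u : Euc d))) ∂σ)
    (μ ν : Measure (Euc d)) [IsProbabilityMeasure μ] [IsProbabilityMeasure ν]
    (pr pn : Euc d → ℝ) (hprm : Measurable pr) (hpnm : Measurable pn)
    (hpr0 : ∀ x, 0 ≤ pr x) (hpn0 : ∀ x, 0 ≤ pn x)
    (hμ : μ = volume.withDensity (fun x => ENNReal.ofReal (pr x)))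
    (hν : ν = volume.withDensity (fun x => ENNReal.ofReal (pn x)))
    (ρr ρtn : sphere (0 : Euc d) 1 → ℝ)
    (hρr : ∀ u : sphere (0 : Euc d) 1,
      ρr u = (∫ t in Ioi (0 : ℝ), t ^ d * pr (t • (u : Euc d))) ^ ((1 : ℝ) / (d + 1)))
    (hρtn : ∀ u : sphere (0 : Euc d) 1,
      ρtn u = (∫ t in Ioi (0 : ℝ), t ^ (d - 2) * pn (t • (u : Euc d))) ^ ((1 : ℝ) / (d - 1)))
    (hρrc : Continuous ρr) (hρtnc : Continuous ρtn)
    (hρrp : ∀ u, 0 < ρr u) (hρtnp : ∀ u, 0 < ρtn u)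
    (Lr : Set (Euc d)) (hLr : IsStarBody Lr)
    (hLrρ : ∀ u : sphere (0 : Euc d) 1, radialFn Lr (u : Euc d) = ρr u) :
    ∀ K : Set (Euc d), IsStarBody K →
      ∃ Krn : Set (Euc d), IsStarBody Krn ∧
        (∀ u : sphere (0 : Euc d) 1,
          radialFn Krn (u : Euc d) =
            ((radialFn K (u : Euc d))⁻¹ +
              radialFn K (u : Euc d) * ρtn u ^ (d - 1) / ρr u ^ (d + 1))⁻¹) ∧
        Integrable (fun x => gauge K x) μ ∧
        Integrable (fun x => (gauge K x)⁻¹) ν ∧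
        (∫ x, gauge K x ∂μ) + (∫ x, (gauge K x)⁻¹ ∂ν) =
          ∫ u : sphere (0 : Euc d) 1,
            ((radialFn K (u : Euc d))⁻¹ +
              radialFn K (u : Euc d) * ρtn u ^ (d - 1) / ρr u ^ (d + 1)) *
              ρr u ^ (d + 1) ∂σ ∧
        (∫ u : sphere (0 : Euc d) 1,
            ((radialFn K (u : Euc d))⁻¹ +
              radialFn K (u : Euc d) * ρtn u ^ (d - 1) / ρr u ^ (d + 1)) *
              ρr u ^ (d + 1) ∂σ) =
          (d : ℝ) * ((1 / (d : ℝ)) * ∫ u : sphere (0 : Euc d) 1,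
            radialFn Lr (u : Euc d) ^ (d + 1) * (radialFn Krn (u : Euc d))⁻¹ ∂σ) :=
  hellinger_loss_eq_dualMixedVolume_general hd σ hσ μ ν pr pn hprm hpnm hpr0 hpn0 hμ hν ρr ρtn hρr
    hρtn hρrc hρtnc hρrp hρtnp Lr hLrρ
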